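/- Let N ≥ 2, let v ∈ ℂᴺ with ‖v‖ = 1, let V⊥ be an N×(N−1) complex matrix with V⊥ᴴV⊥ = I_{N−1} and V⊥ᴴv = 0, and let Q_v := [V⊥, v] be the N×N matrix whose first N−1 columns are those of V⊥ and whose last column is v (so Q_v is unitary). Let Σ be a Hermitian positive definite N×N complex matrix and let L be an invertible lower-triangular N×N matrix with L Lᴴ = Q_vᴴ Σ Q_v. Let Ψ₁₁ be a Hermitian positive definite (N−1)×(N−1) matrix, let ψ₂₂ be a positive real number, and define Σ_t := Q_v L [[Ψ₁₁⁻¹, 0],[0, ψ₂₂⁻¹]] Lᴴ Q_vᴴ, where [[Ψ₁₁⁻¹, 0],[0, ψ₂₂⁻¹]] is the block-diagonal matrix with upper-left block Ψ₁₁⁻¹ and lower-right 1×1 block ψ₂₂⁻¹. Then Σ_t is Hermitian positive definite and the generalized eigenrelation Σ_t⁻¹ v = ψ₂₂ Σ⁻¹ v holds. -/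

import Mathlib

open Matrix
open scoped ComplexOrder

/-! Put `A = Q_v L`. Since `Q_v` is unitary, `Σ = A Aᴴ` and `Σ_t = A D Aᴴ` with
`D = blkdiag(Ψ₁₁⁻¹, ψ₂₂⁻¹)`, so `Σ_t` is a congruence of a positive definite matrix.
Moreover `A⁻¹ v = L⁻¹ e_N`, and `L⁻¹` is again lower triangular, so this vector is supported on
the last coordinate and hence is an eigenvector of `D⁻¹` for `ψ₂₂`. Therefore
`Σ_t⁻¹ v = A⁻ᴴ D⁻¹ A⁻¹ v = ψ₂₂ A⁻ᴴ A⁻¹ v = ψ₂₂ Σ⁻¹ v`. -/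

namespace Matrix

section Columns

variable {ι m k R : Type*} [Fintype ι] [Ring R] [StarRing R]

theorem conjTranspose_fromCols_mul_fromCols_eq_one [DecidableEq m] [DecidableEq k]
    {A : Matrix ι m R} {B : Matrix ι k R}
    (hA : Aᴴ * A = 1) (hB : Bᴴ * B = 1) (hAB : Aᴴ * B = 0) :
    (fromCols A B)ᴴ * fromCols A B = 1 := by
  have hBA : Bᴴ * A = 0 := by simpa using congrArg conjTranspose hAB
  rw [conjTranspose_fromCols_eq_fromRows_conjTranspose, fromRows_mul_fromCols, hA, hB, hAB, hBA,
    fromBlocks_one]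

theorem conjTranspose_fromCols_replicateCol_mul_self_eq_one [DecidableEq m] {V : Matrix ι m R}
    {v : ι → R} (hV : Vᴴ * V = 1) (hVv : Vᴴ *ᵥ v = 0) (hv : star v ⬝ᵥ v = 1) :
    (fromCols V (replicateCol (Fin 1) v))ᴴ * fromCols V (replicateCol (Fin 1) v) = 1 := by
  refine conjTranspose_fromCols_mul_fromCols_eq_one hV ?_ ?_
  · ext i j
    rw [conjTranspose_replicateCol, replicateRow_mul_replicateCol, of_apply, hv,
      Subsingleton.elim i j, one_apply_eq]
  · rw [← replicateCol_mulVec, hVv, replicateCol_zero]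

theorem conjTranspose_fromCols_replicateCol_mulVec (V : Matrix ι m R) (v w : ι → R) :
    (fromCols V (replicateCol (Fin 1) v))ᴴ *ᵥ w = Sum.elim (Vᴴ *ᵥ w) fun _ => star v ⬝ᵥ w := by
  rw [conjTranspose_fromCols_eq_fromRows_conjTranspose, fromRows_mulVec,
    conjTranspose_replicateCol, replicateRow_mulVec_eq_const]
  rfl

end Columns

section Blocks

variable {m m' k k' R : Type*}

theorem BlockTriangular.toBlocks₁₂_eq_zero {α : Type*} [LT α] [Zero R]
    {M : Matrix (m ⊕ k) (m ⊕ k) R} {b : m ⊕ k → α} (hM : M.BlockTriangular b)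
    (hb : ∀ i j, b (.inr j) < b (.inl i)) : M.toBlocks₁₂ = 0 := by
  ext i j
  exact hM (hb i j)

variable [Fintype m] [Fintype k]

theorem mulVec_sumElim_zero_of_toBlocks₁₂_eq_zero [NonUnitalNonAssocSemiring R]
    (M : Matrix (m' ⊕ k') (m ⊕ k) R) (hM : M.toBlocks₁₂ = 0) (w : k → R) :
    M *ᵥ Sum.elim (0 : m → R) w = Sum.elim (0 : m' → R) (M.toBlocks₂₂ *ᵥ w) := by
  conv_lhs => rw [← fromBlocks_toBlocks M, hM, fromBlocks_mulVec]
  simp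

theorem fromBlocks_smul_one_mulVec_sumElim_zero [Semiring R] [DecidableEq k] (A : Matrix m m R)
    (c : R) (u : k → R) :
    fromBlocks A 0 0 (c • 1) *ᵥ Sum.elim (0 : m → R) u = c • Sum.elim (0 : m → R) u := by
  rw [fromBlocks_mulVec]
  ext (i | i) <;> simp [smul_mulVec]

theorem inv_mulVec_sumElim_zero_of_blockTriangular {α : Type*} [LinearOrder α] [CommRing R]
    [DecidableEq m] [DecidableEq k] {L : Matrix (m ⊕ k) (m ⊕ k) R} {b : m ⊕ k → α}
    (hL : L.BlockTriangular b) (hLdet : IsUnit L.det) (hb : ∀ i j, b (.inr j) < b (.inl i))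
    (w : k → R) :
    L⁻¹ *ᵥ Sum.elim (0 : m → R) w = Sum.elim (0 : m → R) (L⁻¹.toBlocks₂₂ *ᵥ w) := by
  have := invertibleOfIsUnitDet L hLdet
  exact mulVec_sumElim_zero_of_toBlocks₁₂_eq_zero _
    ((blockTriangular_inv_of_blockTriangular hL).toBlocks₁₂_eq_zero hb) w

theorem PosDef.fromBlocks_zero [CommRing R] [PartialOrder R] [StarRing R] [IsOrderedAddMonoid R]
    [DecidableEq m] [DecidableEq k] {A : Matrix m m R} {D : Matrix k k R}
    (hA : A.PosDef) (hD : D.PosDef) : (fromBlocks A 0 0 D).PosDef := by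
  refine .of_dotProduct_mulVec_pos (hA.isHermitian.fromBlocks (by simp) hD.isHermitian) ?_
  intro x hx
  rw [← Sum.elim_comp_inl_inr x] at hx ⊢
  rw [fromBlocks_mulVec, Function.star_sumElim, sumElim_dotProduct_sumElim]
  simp only [zero_mulVec, add_zero, zero_add]
  by_cases h : x ∘ Sum.inl = 0
  · rw [h] at hx ⊢
    have h2 : x ∘ Sum.inr ≠ 0 := fun h2 => hx (by rw [h2, Sum.elim_zero_zero])
    simpa using hD.dotProduct_mulVec_pos h2
  · exact add_pos_of_pos_of_nonneg (hA.dotProduct_mulVec_pos h)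
      (hD.posSemidef.dotProduct_mulVec_nonneg _)

end Blocks

section Field

variable {n K : Type*} [Fintype n] [DecidableEq n] [Field K]

theorem inv_mulVec_eq_smul_of_mulVec_eq_inv_smul {D : Matrix n n K} (hD : IsUnit D)
    {x : n → K} {c : K} (hc : c ≠ 0) (h : D *ᵥ x = c⁻¹ • x) : D⁻¹ *ᵥ x = c • x :=
  calc D⁻¹ *ᵥ x = c • D⁻¹ *ᵥ (c⁻¹ • x) := by rw [mulVec_smul, smul_inv_smul₀ hc]
    _ = c • x := by
      rw [← h, mulVec_mulVec, nonsing_inv_mul _ ((isUnit_iff_isUnit_det D).mp hD), one_mulVec]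

theorem eq_mul_mul_conjTranspose_of_conjTranspose_mul_mul_eq [StarRing K] {Q S B : Matrix n n K}
    (hQ : Qᴴ * Q = 1) (h : Qᴴ * S * Q = B) : S = Q * B * Qᴴ := by
  have hQ' : Q * Qᴴ = 1 := mul_eq_one_comm.mp hQ
  rw [← h, ← mul_assoc, ← mul_assoc, hQ', one_mul, mul_assoc, hQ', mul_one]

theorem inv_mul_mul_conjTranspose_mulVec [StarRing K] (A D : Matrix n n K) {v : n → K} {c : K}
    (h : D⁻¹ *ᵥ (A⁻¹ *ᵥ v) = c • A⁻¹ *ᵥ v) :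
    (A * D * Aᴴ)⁻¹ *ᵥ v = c • (A * Aᴴ)⁻¹ *ᵥ v := by
  simp only [mul_inv_rev, ← mulVec_mulVec, h, mulVec_smul]

end Field

end Matrix

theorem stmt_13_general {n : ℕ}
    (v : (Fin n ⊕ Fin 1) → ℂ) (hv : star v ⬝ᵥ v = 1)
    (Vperp : Matrix (Fin n ⊕ Fin 1) (Fin n) ℂ)
    (hVperp : Vperpᴴ * Vperp = 1) (hVperpv : Vperpᴴ *ᵥ v = 0)
    (Qv : Matrix (Fin n ⊕ Fin 1) (Fin n ⊕ Fin 1) ℂ)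
    (hQv : Qv = fromCols Vperp (replicateCol (Fin 1) v))
    (Sig : Matrix (Fin n ⊕ Fin 1) (Fin n ⊕ Fin 1) ℂ)
    (L : Matrix (Fin n ⊕ Fin 1) (Fin n ⊕ Fin 1) ℂ) (hL : IsUnit L.det)
    (hLtri : ∀ i j : Fin n ⊕ Fin 1,
      Sum.elim (fun k : Fin n => (k : ℕ)) (fun _ => n) i <
        Sum.elim (fun k : Fin n => (k : ℕ)) (fun _ => n) j → L i j = 0)
    (hLL : L * Lᴴ = Qvᴴ * Sig * Qv)
    (Ψ₁₁ : Matrix (Fin n) (Fin n) ℂ) (hΨ₁₁ : Ψ₁₁.PosDef)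
    (ψ₂₂ : ℝ) (hψ₂₂ : 0 < ψ₂₂)
    (Sigt : Matrix (Fin n ⊕ Fin 1) (Fin n ⊕ Fin 1) ℂ)
    (hSigt : Sigt = Qv * L *
        fromBlocks Ψ₁₁⁻¹ 0 0 (((ψ₂₂⁻¹ : ℝ) : ℂ) • (1 : Matrix (Fin 1) (Fin 1) ℂ)) *
        Lᴴ * Qvᴴ) :
    Qvᴴ * Qv = 1 ∧ Sigt.PosDef ∧ Sigt⁻¹ *ᵥ v = ((ψ₂₂ : ℝ) : ℂ) • (Sig⁻¹ *ᵥ v) := by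
  have hQQ : Qvᴴ * Qv = 1 :=
    hQv ▸ conjTranspose_fromCols_replicateCol_mul_self_eq_one hVperp hVperpv hv
  set D := fromBlocks Ψ₁₁⁻¹ 0 0 (((ψ₂₂⁻¹ : ℝ) : ℂ) • (1 : Matrix (Fin 1) (Fin 1) ℂ)) with hD_def
  set A := Qv * L with hA_def
  have hA : IsUnit A :=
    ((isUnit_iff_isUnit_det Qv).mpr (isUnit_det_of_left_inverse hQQ)).mul
      ((isUnit_iff_isUnit_det L).mpr hL)
  have hSig : Sig = A * Aᴴ := by
    rw [eq_mul_mul_conjTranspose_of_conjTranspose_mul_mul_eq hQQ hLL.symm, hA_def,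
      conjTranspose_mul]
    simp only [mul_assoc]
  have hSigt' : Sigt = A * D * Aᴴ := by
    rw [hSigt, hA_def, conjTranspose_mul]
    simp only [mul_assoc]
  have hD : D.PosDef := hΨ₁₁.inv.fromBlocks_zero
    (PosDef.one.smul (Complex.zero_lt_real.mpr (inv_pos.mpr hψ₂₂)))
  refine ⟨hQQ, hSigt' ▸ (IsUnit.posDef_star_right_conjugate_iff hA).mpr hD, ?_⟩
  have hAv : A⁻¹ *ᵥ v = Sum.elim (0 : Fin n → ℂ) (L⁻¹.toBlocks₂₂ *ᵥ 1) := by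
    rw [Matrix.mul_inv_rev, ← mulVec_mulVec, inv_eq_left_inv hQQ, hQv,
      conjTranspose_fromCols_replicateCol_mulVec, hVperpv, hv]
    -- `hLtri` is `BlockTriangular` for the reversed order on the index.
    exact inv_mulVec_sumElim_zero_of_blockTriangular (b := OrderDual.toDual ∘
      Sum.elim (fun k : Fin n => (k : ℕ)) (fun _ => n)) hLtri hL (fun i _ => i.isLt) _
  have hDu : D *ᵥ (A⁻¹ *ᵥ v) = (ψ₂₂ : ℂ)⁻¹ • (A⁻¹ *ᵥ v) := by
    rw [hAv, hD_def, ← Complex.ofReal_inv]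
    exact fromBlocks_smul_one_mulVec_sumElim_zero _ _ _
  rw [hSigt', hSig]
  exact inv_mul_mul_conjTranspose_mulVec A D
    (inv_mulVec_eq_smul_of_mulVec_eq_inv_smul hD.isUnit (by exact_mod_cast hψ₂₂.ne') hDu)

/-- Cholesky-based construction of Σ_t satisfying the GER:
with Σ_t = Q_v L blkdiag(Ψ₁₁⁻¹, ψ₂₂⁻¹) Lᴴ Q_vᴴ, the matrix Σ_t is Hermitian positive
definite and Σ_t⁻¹v = ψ₂₂ Σ⁻¹v (and Q_v is unitary). -/
theorem stmt_13 {n : ℕ} (hn : 1 ≤ n)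
    (v : (Fin n ⊕ Fin 1) → ℂ) (hv : star v ⬝ᵥ v = 1)
    (Vperp : Matrix (Fin n ⊕ Fin 1) (Fin n) ℂ)
    (hVperp : Vperpᴴ * Vperp = 1) (hVperpv : Vperpᴴ *ᵥ v = 0)
    (Qv : Matrix (Fin n ⊕ Fin 1) (Fin n ⊕ Fin 1) ℂ)
    (hQv : Qv = fromCols Vperp (replicateCol (Fin 1) v))
    (Sig : Matrix (Fin n ⊕ Fin 1) (Fin n ⊕ Fin 1) ℂ) (hSig : Sig.PosDef)
    (L : Matrix (Fin n ⊕ Fin 1) (Fin n ⊕ Fin 1) ℂ) (hL : IsUnit L.det)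
    (hLtri : ∀ i j : Fin n ⊕ Fin 1,
      Sum.elim (fun k : Fin n => (k : ℕ)) (fun _ => n) i <
        Sum.elim (fun k : Fin n => (k : ℕ)) (fun _ => n) j → L i j = 0)
    (hLL : L * Lᴴ = Qvᴴ * Sig * Qv)
    (Ψ₁₁ : Matrix (Fin n) (Fin n) ℂ) (hΨ₁₁ : Ψ₁₁.PosDef)
    (ψ₂₂ : ℝ) (hψ₂₂ : 0 < ψ₂₂)
    (Sigt : Matrix (Fin n ⊕ Fin 1) (Fin n ⊕ Fin 1) ℂ)
    (hSigt : Sigt = Qv * L *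
        fromBlocks Ψ₁₁⁻¹ 0 0 (((ψ₂₂⁻¹ : ℝ) : ℂ) • (1 : Matrix (Fin 1) (Fin 1) ℂ)) *
        Lᴴ * Qvᴴ) :
    Qvᴴ * Qv = 1 ∧ Sigt.PosDef ∧ Sigt⁻¹ *ᵥ v = ((ψ₂₂ : ℝ) : ℂ) • (Sig⁻¹ *ᵥ v) :=
  stmt_13_general v hv Vperp hVperp hVperpv Qv hQv Sig L hL hLtri hLL Ψ₁₁ hΨ₁₁ ψ₂₂ hψ₂₂ Sigt hSigt
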